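/- Assume r and θ are nonconstant. Then the resultant R₂(t,k) = Res_s(μ, ν_k) ∈ ℝ[t,k] is nonzero and is not a constant polynomial. Moreover, if the system r(t) = −r(s), θ(t) = θ(s) + (2k+1)π admits a solution (t,s) ∈ Ω × Ω for infinitely many integers k, then R₂ has positive degree in the variable k. -/

import Mathlib

/-!
Specialise `t` to a complex number `t₀` at which `μ(t₀, ·)` keeps its generic degree
`max (deg A) (deg B)` and has no root in common with `D`; such `t₀` exist because `A` and `B`
are coprime and not both constant. At a root `z` of `μ(t₀, ·)` we have `D(z) ≠ 0`, so
`ν_k(t₀, z)` is an affine function of `k` with nonzero slope and vanishes for exactly one `k`.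
Hence for all but finitely many `k` the specialisations of `μ` and `ν_k` are coprime and
`R₂(t₀, k) ≠ 0`, whereas `R₂(t₀, k) = 0` for the `k` attached to any root `z`. So `R₂(t₀, k)`
depends on `k`, i.e. `R₂` has positive degree in `k`; this also makes it nonzero and nonconstant.
-/

/-- The Sylvester matrix of two polynomials p, q over a commutative ring, of size
(q.natDegree + p.natDegree): the first q.natDegree rows carry the shifted coefficient
vectors of p (written from the leading coefficient), the remaining p.natDegree rows
carry those of q. -/
noncomputable def sylvesterMatrix {R : Type*} [CommRing R] (p q : Polynomial R) :
    Matrix (Fin (q.natDegree + p.natDegree)) (Fin (q.natDegree + p.natDegree)) R :=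
  Matrix.of fun i j =>
    if (i : ℕ) < q.natDegree then
      (if (j : ℕ) ≤ p.natDegree + (i : ℕ) then p.coeff (p.natDegree + (i : ℕ) - (j : ℕ)) else 0)
    else
      (if (j : ℕ) ≤ q.natDegree + ((i : ℕ) - q.natDegree) then
        q.coeff (q.natDegree + ((i : ℕ) - q.natDegree) - (j : ℕ)) else 0)

/-- The resultant of two polynomials: the determinant of their Sylvester matrix. -/
noncomputable def resultant {R : Type*} [CommRing R] (p q : Polynomial R) : R :=
  (sylvesterMatrix p q).det

/- We work in ℝ[t,k][s]: the coefficient ring is MvPolynomial (Fin 2) ℝ with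
t = X 0 and k = X 1, and s is the variable of the univariate polynomial ring. -/

/-- p(t), as a constant (in s) polynomial over ℝ[t,k]. -/
noncomputable def atT (p : Polynomial ℝ) : Polynomial (MvPolynomial (Fin 2) ℝ) :=
  Polynomial.C (Polynomial.aeval (MvPolynomial.X 0) p)

/-- p(s), a polynomial in s over ℝ[t,k]. -/
noncomputable def atS (p : Polynomial ℝ) : Polynomial (MvPolynomial (Fin 2) ℝ) :=
  p.map (algebraMap ℝ (MvPolynomial (Fin 2) ℝ))

/-- μ(t,s) = A(t)B(s) + A(s)B(t), as a polynomial in s over ℝ[t,k]. -/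
noncomputable def muS (A B : Polynomial ℝ) : Polynomial (MvPolynomial (Fin 2) ℝ) :=
  atT A * atS B + atS A * atT B

/-- ν_k(t,s) = C(t)D(s) − C(s)D(t) − (2k+1)π·D(t)D(s), as a polynomial in s over
ℝ[t,k], with k an indeterminate (k = X 1). -/
noncomputable def nuS (C D : Polynomial ℝ) : Polynomial (MvPolynomial (Fin 2) ℝ) :=
  atT C * atS D - atS C * atT D -
    Polynomial.C ((2 * MvPolynomial.X 1 + 1) * MvPolynomial.C Real.pi) * (atT D * atS D)

/-- R₂(t,k) = Res_s(μ, ν_k) ∈ ℝ[t,k]. -/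
noncomputable def res2 (A B C D : Polynomial ℝ) : MvPolynomial (Fin 2) ℝ :=
  resultant (muS A B) (nuS C D)

open Polynomial

theorem sylvester_eq_submatrix_transpose_sylvesterMatrix {R : Type*} [CommRing R] (p q : R[X]) :
    sylvester p q p.natDegree q.natDegree =
      (sylvesterMatrix p q).transpose.submatrix (Fin.revPerm.trans (finCongr (add_comm _ _)))
        (Fin.revPerm.trans (finCongr (add_comm _ _))) := by
  ext i j
  induction j using Fin.addCases <;>
    simp only [sylvesterMatrix, sylvester, Matrix.transpose_apply, Matrix.submatrix_apply,
      Matrix.of_apply, Equiv.trans_apply, Fin.revPerm_apply, finCongr_apply, Fin.addCases_left,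
      Fin.addCases_right, Fin.val_cast, Fin.val_rev, Fin.val_castAdd, Fin.val_natAdd,
      Set.mem_Icc] <;>
    split_ifs <;> first | omega | (congr 1; omega) | rfl |
      exact (coeff_eq_zero_of_natDegree_lt (by omega)).symm

theorem resultant_eq_polynomial_resultant {R : Type*} [CommRing R] (p q : R[X]) :
    _root_.resultant p q = Polynomial.resultant p q := by
  rw [Polynomial.resultant, sylvester_eq_submatrix_transpose_sylvesterMatrix,
    Matrix.det_submatrix_equiv_self, Matrix.det_transpose, _root_.resultant]

namespace Polynomial

theorem resultant_eq_zero_of_isRoot {R : Type*} [CommRing R] {f g : R[X]} {m n : ℕ}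
    (hf : f.natDegree ≤ m) (hg : g.natDegree ≤ n) (hmn : m ≠ 0 ∨ n ≠ 0) {x : R}
    (hfx : f.IsRoot x) (hgx : g.IsRoot x) : f.resultant g m n = 0 := by
  obtain ⟨a, b, -, -, h⟩ := exists_mul_add_mul_eq_C_resultant f g hf hg hmn
  simpa [hfx.eq_zero, hgx.eq_zero] using congr_arg (eval x) h.symm

theorem resultant_ne_zero_of_natDegree_le {R : Type*} [CommRing R] [IsDomain R] {f g : R[X]}
    {n : ℕ} (hf : f ≠ 0) (hg : g.natDegree ≤ n) (h : IsCoprime f g) :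
    f.resultant g f.natDegree n ≠ 0 := by
  obtain ⟨k, rfl⟩ := Nat.exists_eq_add_of_le hg
  rw [resultant_add_right_deg _ _ _ _ _ le_rfl]
  exact mul_ne_zero (pow_ne_zero _ (leadingCoeff_ne_zero.2 hf)) (resultant_ne_zero f g h)

end Polynomial

theorem IsCoprime.ne_zero_left_of_not_natDegree_eq_zero {R : Type*} [CommSemiring R]
    [NoZeroDivisors R] {A B : R[X]} (h : IsCoprime A B)
    (hAB : ¬(A.natDegree = 0 ∧ B.natDegree = 0)) : A ≠ 0 := by
  rintro rfl
  exact hAB ⟨natDegree_zero, natDegree_eq_zero_of_isUnit (isCoprime_zero_left.1 h)⟩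

theorem IsCoprime.ne_zero_right_of_not_natDegree_eq_zero {R : Type*} [CommSemiring R]
    [NoZeroDivisors R] {A B : R[X]} (h : IsCoprime A B)
    (hAB : ¬(A.natDegree = 0 ∧ B.natDegree = 0)) : B ≠ 0 :=
  h.symm.ne_zero_left_of_not_natDegree_eq_zero (by rwa [and_comm])

theorem coeff_max_natDegree_ne_zero {R : Type*} [Semiring R] {A B : R[X]} (hA : A ≠ 0)
    (hB : B ≠ 0) :
    B.coeff (max A.natDegree B.natDegree) ≠ 0 ∨ A.coeff (max A.natDegree B.natDegree) ≠ 0 := by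
  rcases le_total A.natDegree B.natDegree with h | h
  · exact .inl (by rwa [max_eq_right h, coeff_natDegree, Ne, leadingCoeff_eq_zero])
  · exact .inr (by rwa [max_eq_left h, coeff_natDegree, Ne, leadingCoeff_eq_zero])

theorem IsCoprime.C_mul_add_C_mul_ne_zero {K : Type*} [Field K] {A B : K[X]} (h : IsCoprime A B)
    (hAB : ¬(A.natDegree = 0 ∧ B.natDegree = 0)) {a b : K} (hab : a ≠ 0 ∨ b ≠ 0) :
    C a * A + C b * B ≠ 0 := by
  intro h0
  by_cases hb : b = 0
  · refine h.ne_zero_left_of_not_natDegree_eq_zero hAB ?_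
    simpa [hb, hab.resolve_right (not_not.2 hb)] using h0
  · apply hAB
    have hA : A.natDegree = 0 := by
      have hdvd : A ∣ C b := h.dvd_of_dvd_mul_right ⟨-C a, by linear_combination h0⟩
      simpa using natDegree_le_of_dvd hdvd (C_ne_zero.2 hb)
    refine ⟨hA, ?_⟩
    rw [← natDegree_C_mul (a := b) hb, show C b * B = C (-a) * A by
      rw [C_neg]; linear_combination h0]
    exact Nat.le_zero.1 ((natDegree_C_mul_le _ _).trans hA.le)

theorem MvPolynomial.aeval_eq_of_degreeOf_eq_zero {σ R S : Type*} [CommSemiring R]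
    [CommSemiring S] [Algebra R S] {p : MvPolynomial σ R} {i : σ} (h : p.degreeOf i = 0)
    {x y : σ → S} (hxy : ∀ j ≠ i, x j = y j) : aeval x p = aeval y p :=
  eval₂Hom_congr' rfl
    (fun j hj _ => hxy j fun hji => mem_vars_iff_degreeOf_ne_zero.1 (hji ▸ hj) h) rfl

theorem natDegree_muS_le (A B : ℝ[X]) : (muS A B).natDegree ≤ max A.natDegree B.natDegree := by
  refine (natDegree_add_le _ _).trans (max_le ?_ ?_)
  · exact (natDegree_C_mul_le _ _).trans (natDegree_map_le.trans (le_max_right _ _))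
  · exact (natDegree_mul_C_le _ _).trans (natDegree_map_le.trans (le_max_left _ _))

section Specialization

variable {S : Type*} [CommRing S] [Algebra ℝ S] (A B C D : ℝ[X])

noncomputable def muAt (t : S) : S[X] :=
  Polynomial.C (aeval t A) * B.map (algebraMap ℝ S) +
    A.map (algebraMap ℝ S) * Polynomial.C (aeval t B)

noncomputable def nuAt (t k : S) : S[X] :=
  Polynomial.C (aeval t C) * D.map (algebraMap ℝ S) -
    C.map (algebraMap ℝ S) * Polynomial.C (aeval t D) -
    Polynomial.C ((2 * k + 1) * algebraMap ℝ S Real.pi * aeval t D) * D.map (algebraMap ℝ S)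

theorem map_atT (p : ℝ[X]) (x : Fin 2 → S) :
    (atT p).map (MvPolynomial.aeval x).toRingHom = Polynomial.C (aeval (x 0) p) := by
  simp [atT, ← Polynomial.aeval_algHom_apply]

theorem map_atS (p : ℝ[X]) (x : Fin 2 → S) :
    (atS p).map (MvPolynomial.aeval x).toRingHom = p.map (algebraMap ℝ S) := by
  rw [atS, Polynomial.map_map, AlgHom.toRingHom_eq_coe, AlgHom.comp_algebraMap]

theorem map_muS (t k : S) :
    (muS A B).map (MvPolynomial.aeval ![t, k]).toRingHom = muAt A B t := by
  simp only [muS, muAt, Polynomial.map_add, Polynomial.map_mul, map_atT, map_atS,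
    Matrix.cons_val_zero]

theorem map_nuS (t k : S) :
    (nuS C D).map (MvPolynomial.aeval ![t, k]).toRingHom = nuAt C D t k := by
  simp only [nuS, nuAt, Polynomial.map_sub, Polynomial.map_mul, Polynomial.map_C, map_atT,
    map_atS, Matrix.cons_val_zero]
  simp only [AlgHom.toRingHom_eq_coe, RingHom.coe_coe, map_mul, map_add, map_one,
    MvPolynomial.aeval_ofNat, MvPolynomial.aeval_X, MvPolynomial.algHom_C, Matrix.cons_val_one,
    Matrix.cons_val_fin_one]
  ring

theorem natDegree_muAt_le (t : S) : (muAt A B t).natDegree ≤ (muS A B).natDegree :=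
  map_muS A B t 0 ▸ natDegree_map_le

theorem natDegree_nuAt_le (t k : S) : (nuAt C D t k).natDegree ≤ (nuS C D).natDegree :=
  map_nuS C D t k ▸ natDegree_map_le

theorem eval_muAt (t s : S) :
    (muAt A B t).eval s = aeval t A * aeval s B + aeval s A * aeval t B := by
  simp [muAt, eval_map_algebraMap]

theorem eval_muAt_comm (t s : S) : (muAt A B t).eval s = (muAt A B s).eval t := by
  rw [eval_muAt, eval_muAt]
  ring

theorem eval_nuAt (t k s : S) :
    (nuAt C D t k).eval s = aeval t C * aeval s D - aeval s C * aeval t D -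
      (2 * k + 1) * algebraMap ℝ S Real.pi * aeval t D * aeval s D := by
  simp [nuAt, eval_map_algebraMap]

theorem coeff_muAt (t : S) (j : ℕ) :
    (muAt A B t).coeff j =
      aeval t (Polynomial.C (B.coeff j) * A + Polynomial.C (A.coeff j) * B) := by
  simp [muAt, coeff_C_mul, coeff_mul_C, Algebra.commutes]

theorem aeval_res2 (t k : S) :
    MvPolynomial.aeval ![t, k] (res2 A B C D) =
      (muAt A B t).resultant (nuAt C D t k) (muS A B).natDegree (nuS C D).natDegree := by
  rw [← map_muS A B t k, ← map_nuS, resultant_map_map, res2, resultant_eq_polynomial_resultant]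
  rfl

end Specialization

/-- The `k` with `θ(t) = θ(s) + (2k+1)π`. -/
noncomputable def branchIndex (C D : ℝ[X]) (t s : ℂ) : ℂ :=
  ((aeval t C / aeval t D - aeval s C / aeval s D) / Real.pi - 1) / 2

theorem eval_nuAt_eq_zero_iff {C D : ℝ[X]} {t s : ℂ} (k : ℂ) (ht : aeval t D ≠ 0)
    (hs : aeval s D ≠ 0) : (nuAt C D t k).eval s = 0 ↔ k = branchIndex C D t s := by
  have hπ : (Real.pi : ℂ) ≠ 0 := Complex.ofReal_ne_zero.2 Real.pi_ne_zero
  rw [eval_nuAt, branchIndex, Complex.coe_algebraMap]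
  field_simp
  constructor <;> intro h <;> linear_combination -h

structure IsAdmissible (A B D : ℝ[X]) (t : ℂ) : Prop where
  coeff_muAt_ne_zero : (muAt A B t).coeff (max A.natDegree B.natDegree) ≠ 0
  aeval_ne_zero : aeval t D ≠ 0
  eval_muAt_ne_zero : ∀ s : ℂ, aeval s D = 0 → (muAt A B t).eval s ≠ 0

theorem exists_isAdmissible {A B D : ℝ[X]} (hD : D ≠ 0) (hAB : IsCoprime A B)
    (hr : ¬(A.natDegree = 0 ∧ B.natDegree = 0)) : ∃ t : ℂ, IsAdmissible A B D t := by
  set m := max A.natDegree B.natDegree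
  have hlead : Polynomial.C (B.coeff m) * A + Polynomial.C (A.coeff m) * B ≠ 0 :=
    hAB.C_mul_add_C_mul_ne_zero hr <| coeff_max_natDegree_ne_zero
      (hAB.ne_zero_left_of_not_natDegree_eq_zero hr) (hAB.ne_zero_right_of_not_natDegree_eq_zero hr)
  have hfibre (s : ℂ) : muAt A B s ≠ 0 := by
    rw [show muAt A B s = Polynomial.C (aeval s B) * A.map (algebraMap ℝ ℂ) +
        Polynomial.C (aeval s A) * B.map (algebraMap ℝ ℂ) by rw [muAt]; ring]
    have hAB' : IsCoprime (A.map (algebraMap ℝ ℂ)) (B.map (algebraMap ℝ ℂ)) :=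
      hAB.map (mapRingHom (algebraMap ℝ ℂ))
    exact hAB'.C_mul_add_C_mul_ne_zero (by rwa [natDegree_map, natDegree_map])
      (aeval_ne_zero_of_isCoprime hAB s).symm
  have hfin : ((Polynomial.C (B.coeff m) * A + Polynomial.C (A.coeff m) * B).rootSet ℂ ∪
      D.rootSet ℂ ∪ ⋃ s ∈ D.rootSet ℂ, (muAt A B s).rootSet ℂ).Finite :=
    ((rootSet_finite _ _).union (rootSet_finite _ _)).union
      ((rootSet_finite _ _).biUnion fun s _ => rootSet_finite _ _)
  obtain ⟨t, ht⟩ := hfin.infinite_compl.nonempty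
  simp only [Set.mem_compl_iff, Set.mem_union, Set.mem_iUnion, not_or, not_exists,
    mem_rootSet_of_ne hlead, mem_rootSet_of_ne hD, mem_rootSet_of_ne (hfibre _)] at ht
  obtain ⟨⟨hμ, hDt⟩, hroots⟩ := ht
  refine ⟨t, by rwa [coeff_muAt], hDt, fun s hs => ?_⟩
  rw [eval_muAt_comm, ← coe_aeval_eq_eval]
  exact hroots s hs

namespace IsAdmissible

variable {A B D : ℝ[X]} {t : ℂ}

theorem muAt_ne_zero (ht : IsAdmissible A B D t) : muAt A B t ≠ 0 :=
  fun h => ht.coeff_muAt_ne_zero (by rw [h, coeff_zero])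

theorem natDegree_muAt (ht : IsAdmissible A B D t) :
    (muAt A B t).natDegree = max A.natDegree B.natDegree :=
  le_antisymm ((natDegree_muAt_le A B t).trans (natDegree_muS_le A B))
    (le_natDegree_of_ne_zero ht.coeff_muAt_ne_zero)

theorem natDegree_muS (ht : IsAdmissible A B D t) :
    (muS A B).natDegree = max A.natDegree B.natDegree :=
  le_antisymm (natDegree_muS_le A B) (ht.natDegree_muAt ▸ natDegree_muAt_le A B t)

theorem aeval_ne_zero_of_isRoot (ht : IsAdmissible A B D t) {s : ℂ}
    (hs : (muAt A B t).IsRoot s) : aeval s D ≠ 0 :=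
  fun h => ht.eval_muAt_ne_zero s h hs

theorem exists_aeval_res2_ne_zero (ht : IsAdmissible A B D t) (C : ℝ[X]) :
    ∃ k : ℂ, MvPolynomial.aeval ![t, k] (res2 A B C D) ≠ 0 := by
  obtain ⟨k, hk⟩ := Infinite.exists_notMem_finset
    ((muAt A B t).roots.toFinset.image (branchIndex C D t))
  refine ⟨k, ?_⟩
  rw [aeval_res2, ht.natDegree_muS, ← ht.natDegree_muAt]
  refine resultant_ne_zero_of_natDegree_le ht.muAt_ne_zero (natDegree_nuAt_le C D t k) ?_
  rw [isCoprime_iff_aeval_ne_zero_of_isAlgClosed (k := ℂ) (K := ℂ)]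
  intro s
  simp only [coe_aeval_eq_eval]
  refine or_iff_not_imp_left.2 fun hs => ?_
  rw [not_not] at hs
  rw [Ne, eval_nuAt_eq_zero_iff k ht.aeval_ne_zero (ht.aeval_ne_zero_of_isRoot hs)]
  rintro rfl
  exact hk (Finset.mem_image_of_mem _ (by simpa [ht.muAt_ne_zero] using hs))

theorem exists_aeval_res2_eq_zero (ht : IsAdmissible A B D t) (C : ℝ[X])
    (hm : max A.natDegree B.natDegree ≠ 0) :
    ∃ k : ℂ, MvPolynomial.aeval ![t, k] (res2 A B C D) = 0 := by
  obtain ⟨s, hs⟩ := IsAlgClosed.exists_root (muAt A B t) (by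
    rw [degree_eq_natDegree ht.muAt_ne_zero, ht.natDegree_muAt]
    exact_mod_cast hm)
  refine ⟨branchIndex C D t s, ?_⟩
  rw [aeval_res2]
  exact resultant_eq_zero_of_isRoot (ht.natDegree_muS ▸ ht.natDegree_muAt.le)
    (natDegree_nuAt_le C D t _) (.inl (ht.natDegree_muS ▸ hm)) hs
    ((eval_nuAt_eq_zero_iff _ ht.aeval_ne_zero (ht.aeval_ne_zero_of_isRoot hs)).2 rfl)

end IsAdmissible

theorem degreeOf_res2_pos {A B C D : ℝ[X]} (hD : D ≠ 0) (hAB : IsCoprime A B)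
    (hr : ¬(A.natDegree = 0 ∧ B.natDegree = 0)) : 0 < (res2 A B C D).degreeOf 1 := by
  obtain ⟨t, ht⟩ := exists_isAdmissible hD hAB hr
  obtain ⟨k₁, hk₁⟩ := ht.exists_aeval_res2_ne_zero C
  obtain ⟨k₂, hk₂⟩ := ht.exists_aeval_res2_eq_zero C (by omega)
  refine Nat.pos_of_ne_zero fun h => hk₁ ?_
  rw [MvPolynomial.aeval_eq_of_degreeOf_eq_zero h (y := ![t, k₂]) (by simp [Fin.forall_fin_two]),
    hk₂]

theorem resultant_mu_nu_nonconstant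
    (A B C D : Polynomial ℝ) (hD : D ≠ 0)
    (hAB : IsCoprime A B)
    (hr : ¬ (A.natDegree = 0 ∧ B.natDegree = 0)) :
    res2 A B C D ≠ 0 ∧
    (∀ c : ℝ, res2 A B C D ≠ MvPolynomial.C c) ∧
    ({k : ℤ | ∃ t s : ℝ,
        (B.eval t ≠ 0 ∧ D.eval t ≠ 0) ∧ (B.eval s ≠ 0 ∧ D.eval s ≠ 0) ∧
        A.eval t / B.eval t = -(A.eval s / B.eval s) ∧
        C.eval t / D.eval t = C.eval s / D.eval s + (2 * (k : ℝ) + 1) * Real.pi}.Infinite →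
      0 < (res2 A B C D).degreeOf 1) := by
  have hk : 0 < (res2 A B C D).degreeOf 1 := degreeOf_res2_pos hD hAB hr
  have hC (c : ℝ) : res2 A B C D ≠ MvPolynomial.C c := by
    rintro hc
    simp [hc] at hk
  exact ⟨by simpa using hC 0, hC, fun _ => hk⟩
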